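/- arXiv:2011.08066 — 3 statements merged into one kernel-verified Lean document; each statement's English description precedes it below -/
import Mathlib

section
/- Let α > −1 be a real number. Then the improper integral ∫_ℝ dy/(cosh y + α) converges and equals: (4/√(1−α²))·arctan(√((1−α)/(1+α))) if |α| < 1; 2 if α = 1; and (2/√(α²−1))·log(α + √(α²−1)) if α > 1. -/
open MeasureTheory Real

open Filter Set Topology

/-!
The substitution `t = tanh (y / 2) = (exp y - 1) / (exp y + 1)` maps `ℝ` onto `(-1, 1)` and turns
`dy / (cosh y + α)` into `2 dt / ((1 + α) + (1 - α) t ^ 2)`. The sign of `1 - α` decides whether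
an antiderivative of the latter is an arctangent, linear, or (by partial fractions) a difference
of logarithms. Integrability comes from `1 + y ^ 2 ≤ 4 cosh y`.
-/

lemma one_add_sq_le_four_mul_cosh (y : ℝ) : 1 + y ^ 2 ≤ 4 * cosh y := by
  have h := quadratic_le_exp_of_nonneg (abs_nonneg y)
  rw [← cosh_abs, cosh_eq, sq_abs] at *
  nlinarith [exp_pos (-|y|), abs_nonneg y]

lemma cosh_add_pos {α : ℝ} (hα : -1 < α) (y : ℝ) : 0 < cosh y + α := by
  linarith [one_le_cosh y]

lemma integrable_one_div_cosh_add {α : ℝ} (hα : -1 < α) :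
    Integrable fun y : ℝ => 1 / (cosh y + α) := by
  set m := min 1 (1 + α)
  have hm : 0 < m := lt_min one_pos (by linarith)
  have hlower (y : ℝ) : m * cosh y ≤ cosh y + α := by
    rcases le_or_gt 0 α with h | h
    · nlinarith [min_le_left 1 (1 + α), cosh_pos y]
    · nlinarith [min_le_right 1 (1 + α), one_le_cosh y]
  refine (integrable_inv_one_add_sq.const_mul (4 / m)).mono'
    (continuous_const.div (by fun_prop) fun y => (cosh_add_pos hα y).ne').aestronglyMeasurable
    (ae_of_all _ fun y => ?_)
  rw [norm_of_nonneg (one_div_pos.2 (cosh_add_pos hα y)).le, ← div_eq_mul_inv,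
    div_div, div_le_div_iff₀ (cosh_add_pos hα y) (by positivity)]
  nlinarith [one_add_sq_le_four_mul_cosh y, hlower y]

noncomputable def halfTanh (y : ℝ) : ℝ := (exp y - 1) / (exp y + 1)

lemma hasDerivAt_halfTanh (y : ℝ) :
    HasDerivAt halfTanh (2 * exp y / (exp y + 1) ^ 2) y := by
  have h : HasDerivAt (fun x => (exp x - 1) / (exp x + 1)) _ y :=
    ((hasDerivAt_exp y).sub_const 1).div ((hasDerivAt_exp y).add_const 1) (by positivity)
  exact h.congr_deriv (by ring)

lemma halfTanh_mem_Icc (y : ℝ) : halfTanh y ∈ Icc (-1) 1 := by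
  have h := exp_pos y
  rw [halfTanh, mem_Icc, le_div_iff₀ (by positivity), div_le_iff₀ (by positivity)]
  constructor <;> linarith

lemma tendsto_halfTanh_atTop : Tendsto halfTanh atTop (𝓝 1) := by
  have h : Tendsto (fun y => 1 - 2 / (exp y + 1)) atTop (𝓝 (1 - 0)) :=
    tendsto_const_nhds.sub <| tendsto_const_nhds.div_atTop <|
      tendsto_atTop_add_const_right _ 1 tendsto_exp_atTop
  rw [sub_zero] at h
  refine h.congr fun y => ?_
  rw [halfTanh]
  field_simp
  ring

lemma tendsto_halfTanh_atBot : Tendsto halfTanh atBot (𝓝 (-1)) := by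
  have h : ContinuousAt (fun u : ℝ => (u - 1) / (u + 1)) 0 := by
    fun_prop (disch := norm_num)
  have := h.tendsto.comp tendsto_exp_atBot
  norm_num [Function.comp_def] at this
  exact this

lemma one_div_cosh_add_eq (α y : ℝ) :
    1 / (cosh y + α) =
      2 / ((1 + α) + (1 - α) * halfTanh y ^ 2) * (2 * exp y / (exp y + 1) ^ 2) := by
  have hu := exp_pos y
  have key : (1 + α) + (1 - α) * halfTanh y ^ 2 = 4 * exp y * (cosh y + α) / (exp y + 1) ^ 2 := by
    rw [halfTanh, cosh_eq, exp_neg]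
    field_simp
    ring
  rw [key]
  field_simp
  ring

lemma integral_one_div_cosh_add_eq_sub {α : ℝ} (hα : -1 < α) {G : ℝ → ℝ}
    (hG : ∀ t ∈ Icc (-1 : ℝ) 1, HasDerivAt G (2 / ((1 + α) + (1 - α) * t ^ 2)) t) :
    ∫ y, 1 / (cosh y + α) = G 1 - G (-1) := by
  have hderiv (y : ℝ) : HasDerivAt (G ∘ halfTanh) (1 / (cosh y + α)) y := by
    rw [one_div_cosh_add_eq]
    exact (hG _ (halfTanh_mem_Icc y)).comp y (hasDerivAt_halfTanh y)
  exact integral_of_hasDerivAt_of_tendsto hderiv (integrable_one_div_cosh_add hα)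
    ((hG (-1) (by norm_num)).continuousAt.tendsto.comp tendsto_halfTanh_atBot)
    ((hG 1 (by norm_num)).continuousAt.tendsto.comp tendsto_halfTanh_atTop)

lemma integral_one_div_cosh_add_of_abs_lt_one {α : ℝ} (h : |α| < 1) :
    ∫ y, 1 / (cosh y + α) = 4 / √(1 - α ^ 2) * arctan √((1 - α) / (1 + α)) := by
  obtain ⟨hα₁, hα₂⟩ := abs_lt.1 h
  have hα : 0 < 1 + α := by linarith
  set c := √(1 - α ^ 2)
  have hc : 0 < c := sqrt_pos.2 (by nlinarith)
  have hc2 : c ^ 2 = 1 - α ^ 2 := sq_sqrt (by nlinarith)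
  have hratio : c / (1 + α) = √((1 - α) / (1 + α)) := by
    have hsq : (c / (1 + α)) ^ 2 = (1 - α) / (1 + α) := by
      rw [div_pow, hc2]
      field_simp
      ring
    rw [← hsq, sqrt_sq (div_pos hc hα).le]
  have hG (t : ℝ) : HasDerivAt (fun t => 2 / c * arctan (c / (1 + α) * t))
      (2 / ((1 + α) + (1 - α) * t ^ 2)) t := by
    refine (((hasDerivAt_id' t).const_mul (c / (1 + α))).arctan.const_mul (2 / c)).congr_deriv ?_
    have hq : 0 < (1 + α) + (1 - α) * t ^ 2 := by nlinarith
    rw [mul_pow, div_pow, hc2]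
    field_simp
    rw [div_eq_one_iff_eq (by nlinarith)]
    ring
  rw [integral_one_div_cosh_add_eq_sub (by linarith) fun t _ => hG t, ← hratio]
  simp only [mul_one, mul_neg, arctan_neg]
  ring

lemma integral_one_div_cosh_add_one : ∫ y, 1 / (cosh y + 1) = 2 := by
  rw [integral_one_div_cosh_add_eq_sub (G := id) (by norm_num) fun t _ =>
    (hasDerivAt_id t).congr_deriv (by norm_num)]
  norm_num

lemma integral_one_div_cosh_add_of_one_lt {α : ℝ} (hα : 1 < α) :
    ∫ y, 1 / (cosh y + α) = 2 / √(α ^ 2 - 1) * log (α + √(α ^ 2 - 1)) := by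
  set c := √(α ^ 2 - 1)
  have hc : 0 < c := sqrt_pos.2 (by nlinarith)
  have hc2 : c ^ 2 = α ^ 2 - 1 := sq_sqrt (by nlinarith)
  have hcα : c < 1 + α := by nlinarith
  have hG : ∀ t ∈ Icc (-1 : ℝ) 1, HasDerivAt
      (fun t => (log ((1 + α) + c * t) - log ((1 + α) - c * t)) / c)
      (2 / ((1 + α) + (1 - α) * t ^ 2)) t := by
    rintro t ⟨ht₁, ht₂⟩
    have hp : 0 < (1 + α) + c * t := by nlinarith
    have hm : 0 < (1 + α) - c * t := by nlinarith
    have hlin := (hasDerivAt_id' t).const_mul c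
    refine (((hlin.const_add (1 + α)).log hp.ne').sub
      ((hlin.const_sub (1 + α)).log hm.ne')).div_const c |>.congr_deriv ?_
    field_simp
    rw [eq_div_iff (by nlinarith [mul_pos hp hm])]
    linear_combination 2 * t ^ 2 * hc2
  have hlog : log ((1 + α) + c) - log ((1 + α) - c) = log (α + c) := by
    rw [← log_div (by positivity) (by linarith)]
    congr 1
    field_simp [(sub_pos.2 hcα).ne']
    linear_combination hc2
  rw [integral_one_div_cosh_add_eq_sub (by linarith) hG, ← hlog]
  simp only [mul_one, mul_neg, ← sub_eq_add_neg, sub_neg_eq_add]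
  ring

/-- Gradshteyn–Ryzhik 3.513.2: for `α > -1`, the integral `∫_ℝ dy/(cosh y + α)`
converges and has the stated closed form in each of the three regimes. -/
theorem stmt_0 (α : ℝ) (hα : -1 < α) :
    Integrable (fun y : ℝ => 1 / (Real.cosh y + α)) ∧
    (|α| < 1 →
      (∫ y : ℝ, 1 / (Real.cosh y + α)) =
        4 / Real.sqrt (1 - α ^ 2) * Real.arctan (Real.sqrt ((1 - α) / (1 + α)))) ∧
    (α = 1 → (∫ y : ℝ, 1 / (Real.cosh y + α)) = 2) ∧
    (1 < α →
      (∫ y : ℝ, 1 / (Real.cosh y + α)) =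
        2 / Real.sqrt (α ^ 2 - 1) * Real.log (α + Real.sqrt (α ^ 2 - 1))) := by
  refine ⟨integrable_one_div_cosh_add hα, integral_one_div_cosh_add_of_abs_lt_one, ?_,
    integral_one_div_cosh_add_of_one_lt⟩
  rintro rfl
  exact integral_one_div_cosh_add_one
end

section
/- Fix b ∈ ℝ, set γ = 1 + (16/3)b, and when γ ≤ 0 set s_* = √(−γ/(1−γ)). Let ω > 0 and let c satisfy −2√ω < c < 2√ω if γ > 0, or −2√ω < c < −2 s_* √ω if γ ≤ 0. Then c² + γ(4ω − c²) > 0, the expression √(c² + γ(4ω − c²))·cosh(√(4ω − c²)·x) − c is strictly positive for every x ∈ ℝ, and the function Φ(x) = ( 2(4ω − c²) / ( √(c² + γ(4ω − c²))·cosh(√(4ω − c²)·x) − c ) )^{1/2} is a smooth, strictly positive, even function on ℝ, tends to 0 as |x| → ∞, and satisfies the ordinary differential equation −Φ''(x) + (ω − c²/4)·Φ(x) + (c/2)·Φ(x)³ − (3/16)·γ·Φ(x)⁵ = 0 for all x ∈ ℝ. -/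
open MeasureTheory Real Filter

/-- The (bright) soliton profile of the derivative NLS after gauge transformation. -/
noncomputable def PhiB (γ ω c x : ℝ) : ℝ :=
  Real.sqrt (2 * (4 * ω - c ^ 2) /
    (Real.sqrt (c ^ 2 + γ * (4 * ω - c ^ 2)) * Real.cosh (Real.sqrt (4 * ω - c ^ 2) * x) - c))

/-!
Put `k = √(4ω - c²)`, `A = √(c² + γk²)` and `D(x) = A cosh (k x) - c`, so that
`Φ = √(2k²) · D^(-1/2)`. The admissibility conditions on `c` imply `k > 0` and `c < A`,
hence `D ≥ A - c > 0`, and `Φ` is smooth, positive, even and decays because `D` grows like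
`cosh`. For the equation, `D'' = k² (D + c)` and `D'² = k² ((D + c)² - A²)`; in the variable
`s = D^(-1/2)`, which satisfies `s² D = 1`, the left-hand side becomes a polynomial identity.
-/

open Topology

theorem Real.tendsto_cosh_cocompact : Tendsto cosh (cocompact ℝ) atTop := by
  refine tendsto_atTop_mono (fun x => ?_)
    ((tendsto_exp_atTop.comp tendsto_norm_cocompact_atTop).atTop_div_const two_pos)
  have := exp_pos x
  have := exp_pos (-x)
  rcases abs_cases x with ⟨hx, -⟩ | ⟨hx, -⟩ <;>
    simp only [Function.comp_apply, norm_eq_abs, hx, cosh_eq] <;> linarith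

theorem Real.hasDerivAt_rpow_neg_half {f : ℝ → ℝ} {f' x : ℝ} (hf : HasDerivAt f f' x)
    (hx : 0 < f x) :
    HasDerivAt (fun y => f y ^ (-(1 / 2) : ℝ))
      (-(1 / 2) * f' * (f x ^ (-(1 / 2) : ℝ)) ^ 3) x := by
  convert hf.rpow_const (p := -(1 / 2)) (Or.inl hx.ne') using 1
  rw [← rpow_mul_natCast hx.le]
  congr 1
  · ring
  · norm_num

theorem Real.sqrt_div_eq_mul_rpow_neg_half (a : ℝ) {d : ℝ} (hd : 0 ≤ d) :
    √(a / d) = √a * d ^ (-(1 / 2) : ℝ) := by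
  rw [sqrt_div' a hd, sqrt_eq_rpow d, rpow_neg hd, div_eq_mul_inv]

noncomputable def solitonDenom (A k c x : ℝ) : ℝ := A * cosh (k * x) - c

noncomputable def solitonProfile (C A k c x : ℝ) : ℝ := C * solitonDenom A k c x ^ (-(1 / 2) : ℝ)

section

variable {C A k c : ℝ}

theorem solitonDenom_pos (hA : 0 ≤ A) (hcA : c < A) (x : ℝ) : 0 < solitonDenom A k c x := by
  have := le_mul_of_one_le_right hA (one_le_cosh (k * x))
  unfold solitonDenom
  linarith

theorem hasDerivAt_solitonDenom (x : ℝ) :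
    HasDerivAt (solitonDenom A k c) (A * k * sinh (k * x)) x :=
  (((((hasDerivAt_id' x).const_mul k).cosh).const_mul A).sub_const c).congr_deriv (by ring)

theorem hasDerivAt_mul_sinh (x : ℝ) :
    HasDerivAt (fun y => A * k * sinh (k * y)) (k ^ 2 * (solitonDenom A k c x + c)) x :=
  ((((hasDerivAt_id' x).const_mul k).sinh).const_mul (A * k)).congr_deriv
    (by unfold solitonDenom; ring)

theorem sq_mul_sinh_eq_solitonDenom (x : ℝ) :
    (A * sinh (k * x)) ^ 2 = (solitonDenom A k c x + c) ^ 2 - A ^ 2 := by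
  unfold solitonDenom
  linear_combination (-A ^ 2) * cosh_sq_sub_sinh_sq (k * x)

theorem tendsto_solitonDenom_cocompact (hA : 0 < A) (hk : k ≠ 0) :
    Tendsto (solitonDenom A k c) (cocompact ℝ) atTop :=
  tendsto_atTop_add_const_right _ (-c)
    ((tendsto_cosh_cocompact.comp (tendsto_cocompact_mul_left₀ hk)).const_mul_atTop hA)

theorem solitonProfile_pos (hC : 0 < C) (hA : 0 ≤ A) (hcA : c < A) (x : ℝ) :
    0 < solitonProfile C A k c x :=
  mul_pos hC (rpow_pos_of_pos (solitonDenom_pos hA hcA x) _)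

theorem contDiff_solitonProfile (hA : 0 ≤ A) (hcA : c < A) {n : WithTop ℕ∞} :
    ContDiff ℝ n (solitonProfile C A k c) := by
  have hD : ContDiff ℝ n (solitonDenom A k c) := by unfold solitonDenom; fun_prop
  exact contDiff_const.mul (hD.rpow_const_of_ne fun x => (solitonDenom_pos hA hcA x).ne')

theorem tendsto_solitonProfile_cocompact (hA : 0 < A) (hk : k ≠ 0) :
    Tendsto (solitonProfile C A k c) (cocompact ℝ) (𝓝 0) := by
  have := ((tendsto_rpow_neg_atTop (by norm_num : (0 : ℝ) < 1 / 2)).comp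
    (tendsto_solitonDenom_cocompact (c := c) hA hk)).const_mul C
  rwa [mul_zero] at this

theorem solitonProfile_ode {γ : ℝ} (hA : 0 ≤ A) (hcA : c < A)
    (hA2 : A ^ 2 = c ^ 2 + γ * k ^ 2) (hC : C ^ 2 = 2 * k ^ 2) (x : ℝ) :
    -deriv (deriv (solitonProfile C A k c)) x + k ^ 2 / 4 * solitonProfile C A k c x
      + c / 2 * solitonProfile C A k c x ^ 3 - 3 / 16 * γ * solitonProfile C A k c x ^ 5 = 0 := by
  set s : ℝ → ℝ := fun y => solitonDenom A k c y ^ (-(1 / 2) : ℝ)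
  have hD : ∀ y, 0 < solitonDenom A k c y := solitonDenom_pos hA hcA
  have hs : ∀ y, HasDerivAt s (-(1 / 2) * (A * k * sinh (k * y)) * s y ^ 3) y :=
    fun y => hasDerivAt_rpow_neg_half (hasDerivAt_solitonDenom y) (hD y)
  have hd1 : deriv (solitonProfile C A k c) =
      fun y => C * (-(1 / 2) * (A * k * sinh (k * y)) * s y ^ 3) :=
    funext fun y => ((hs y).const_mul C).deriv
  have hd2 : HasDerivAt (fun y => C * (-(1 / 2) * (A * k * sinh (k * y)) * s y ^ 3))
      (C * (-(1 / 2) * k ^ 2 * (solitonDenom A k c x + c) * s x ^ 3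
        + 3 / 4 * (A * k * sinh (k * x)) ^ 2 * s x ^ 5)) x :=
    ((((hasDerivAt_mul_sinh (c := c) x).const_mul (-(1 / 2))).mul ((hs x).pow 3)).const_mul
      C).congr_deriv (by simp only [Pi.pow_apply, Nat.cast_ofNat]; ring)
  have hsD : s x ^ 2 * solitonDenom A k c x = 1 := by
    rw [← rpow_mul_natCast (hD x).le]
    norm_num [rpow_neg_one, (hD x).ne']
  have hP : solitonProfile C A k c x = C * s x := rfl
  rw [hd1, hd2.deriv, hP]
  -- Eliminating `sinh²`, `A²` and `C²` cancels every `γ`-term; what is left is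
  -- `C k² (s/2 + c s³/2 - 3/4 D² s⁵ - 3/2 c D s⁵ + s/4 + c s³)`, which vanishes as `s² D = 1`.
  linear_combination (-(3 / 4) * C * k ^ 2 * s x ^ 5) * sq_mul_sinh_eq_solitonDenom (c := c) x
    + (3 / 4 * C * k ^ 2 * s x ^ 5) * hA2
    + (c / 2 * C * s x ^ 3 - 3 / 16 * γ * C * s x ^ 5 * (C ^ 2 + 2 * k ^ 2)) * hC
    + (C * k ^ 2 * (1 / 2 * s x - 3 / 4 * solitonDenom A k c x * s x ^ 3 - 3 / 4 * s x
        - 3 / 2 * c * s x ^ 3)) * hsD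

end

theorem sq_lt_four_mul {ω c : ℝ} (hω : 0 ≤ ω) (h₁ : -2 * √ω < c) (h₂ : c < 2 * √ω) :
    c ^ 2 < 4 * ω := by
  have := sq_lt_sq' (by linarith) h₂
  rwa [mul_pow, sq_sqrt hω, show (2 : ℝ) ^ 2 = 4 by norm_num] at this

theorem soliton_params_of_pos {γ ω c : ℝ} (hγ : 0 < γ) (hω : 0 ≤ ω) (h₁ : -2 * √ω < c)
    (h₂ : c < 2 * √ω) :
    c ^ 2 < 4 * ω ∧ 0 < c ^ 2 + γ * (4 * ω - c ^ 2) ∧ c < √(c ^ 2 + γ * (4 * ω - c ^ 2)) := by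
  have hK := sq_lt_four_mul hω h₁ h₂
  have hM : c ^ 2 < c ^ 2 + γ * (4 * ω - c ^ 2) :=
    lt_add_of_pos_right _ (mul_pos hγ (by linarith))
  exact ⟨hK, (sq_nonneg c).trans_lt hM, lt_sqrt_of_sq_lt hM⟩

theorem soliton_params_of_nonpos {γ ω c : ℝ} (hγ : γ ≤ 0) (hω : 0 ≤ ω) (h₁ : -2 * √ω < c)
    (h₂ : c < -2 * √(-γ / (1 - γ)) * √ω) :
    c ^ 2 < 4 * ω ∧ 0 < c ^ 2 + γ * (4 * ω - c ^ 2) ∧ c < √(c ^ 2 + γ * (4 * ω - c ^ 2)) := by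
  have ht : 0 ≤ 2 * √(-γ / (1 - γ)) * √ω := by positivity
  have hK := sq_lt_four_mul hω h₁ (by linarith [sqrt_nonneg ω])
  have hsq := sq_lt_sq' (by linarith) (show 2 * √(-γ / (1 - γ)) * √ω < -c by linarith)
  rw [neg_sq, mul_pow, mul_pow, sq_sqrt hω, sq_sqrt (div_nonneg (by linarith) (by linarith))]
    at hsq
  have hM : 0 < c ^ 2 + γ * (4 * ω - c ^ 2) := by
    have h1γ : 0 < 1 - γ := by linarith
    have := mul_lt_mul_of_pos_right hsq h1γ
    rw [show 2 ^ 2 * (-γ / (1 - γ)) * ω * (1 - γ) = -4 * γ * ω by field_simp; ring] at this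
    linarith
  exact ⟨hK, hM, by linarith [sqrt_nonneg (c ^ 2 + γ * (4 * ω - c ^ 2))]⟩

theorem PhiB_eq_solitonProfile {γ ω c : ℝ} (hcA : c < √(c ^ 2 + γ * (4 * ω - c ^ 2))) :
    PhiB γ ω c = solitonProfile (√(2 * (4 * ω - c ^ 2))) (√(c ^ 2 + γ * (4 * ω - c ^ 2)))
      (√(4 * ω - c ^ 2)) c :=
  funext fun x => sqrt_div_eq_mul_rpow_neg_half _ (solitonDenom_pos (sqrt_nonneg _) hcA x).le

theorem stmt_2_general (γ ω c : ℝ) (hω : 0 < ω)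
    (hc1 : 0 < γ → -2 * Real.sqrt ω < c ∧ c < 2 * Real.sqrt ω)
    (hc2 : γ ≤ 0 → -2 * Real.sqrt ω < c ∧
      c < -2 * Real.sqrt (-γ / (1 - γ)) * Real.sqrt ω) :
    0 < c ^ 2 + γ * (4 * ω - c ^ 2) ∧
    (∀ x : ℝ, 0 < Real.sqrt (c ^ 2 + γ * (4 * ω - c ^ 2)) *
        Real.cosh (Real.sqrt (4 * ω - c ^ 2) * x) - c) ∧
    ContDiff ℝ (⊤ : ℕ∞) (fun x => PhiB γ ω c x) ∧
    (∀ x : ℝ, 0 < PhiB γ ω c x) ∧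
    (∀ x : ℝ, PhiB γ ω c (-x) = PhiB γ ω c x) ∧
    Tendsto (fun x => PhiB γ ω c x) (cocompact ℝ) (nhds 0) ∧
    (∀ x : ℝ, -deriv (deriv (fun y => PhiB γ ω c y)) x
        + (ω - c ^ 2 / 4) * PhiB γ ω c x
        + c / 2 * PhiB γ ω c x ^ 3 - 3 / 16 * γ * PhiB γ ω c x ^ 5 = 0) := by
  obtain ⟨hK, hM, hcA⟩ : c ^ 2 < 4 * ω ∧ 0 < c ^ 2 + γ * (4 * ω - c ^ 2) ∧
      c < √(c ^ 2 + γ * (4 * ω - c ^ 2)) := by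
    rcases le_or_gt γ 0 with hγ | hγ
    · exact soliton_params_of_nonpos hγ hω.le (hc2 hγ).1 (hc2 hγ).2
    · exact soliton_params_of_pos hγ hω.le (hc1 hγ).1 (hc1 hγ).2
  replace hK : 0 < 4 * ω - c ^ 2 := by linarith
  have hA : 0 ≤ √(c ^ 2 + γ * (4 * ω - c ^ 2)) := sqrt_nonneg _
  have heven (x : ℝ) : PhiB γ ω c (-x) = PhiB γ ω c x := by simp only [PhiB, mul_neg, cosh_neg]
  refine ⟨hM, solitonDenom_pos hA hcA, ?_, ?_, heven, ?_, fun x => ?_⟩ <;>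
    rw [PhiB_eq_solitonProfile hcA]
  · exact contDiff_solitonProfile hA hcA
  · exact solitonProfile_pos (sqrt_pos.2 (by linarith)) hA hcA
  · exact tendsto_solitonProfile_cocompact (sqrt_pos.2 hM) (sqrt_pos.2 hK).ne'
  · have := solitonProfile_ode (C := √(2 * (4 * ω - c ^ 2))) (k := √(4 * ω - c ^ 2)) hA hcA
      (by rw [sq_sqrt hM.le, sq_sqrt hK.le]) (by rw [sq_sqrt (by linarith), sq_sqrt hK.le]) x
    rw [sq_sqrt hK.le] at this
    linear_combination this

/-- Existence/verification of the soliton profile: under the stated parameter conditions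
the explicit profile is smooth, positive, even, vanishes at infinity and solves
`-Φ'' + (ω - c²/4)Φ + (c/2)Φ³ - (3/16)γΦ⁵ = 0`. -/
theorem stmt_2 (b γ ω c : ℝ) (hγ : γ = 1 + 16 / 3 * b) (hω : 0 < ω)
    (hc1 : 0 < γ → -2 * Real.sqrt ω < c ∧ c < 2 * Real.sqrt ω)
    (hc2 : γ ≤ 0 → -2 * Real.sqrt ω < c ∧
      c < -2 * Real.sqrt (-γ / (1 - γ)) * Real.sqrt ω) :
    0 < c ^ 2 + γ * (4 * ω - c ^ 2) ∧
    (∀ x : ℝ, 0 < Real.sqrt (c ^ 2 + γ * (4 * ω - c ^ 2)) *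
        Real.cosh (Real.sqrt (4 * ω - c ^ 2) * x) - c) ∧
    ContDiff ℝ (⊤ : ℕ∞) (fun x => PhiB γ ω c x) ∧
    (∀ x : ℝ, 0 < PhiB γ ω c x) ∧
    (∀ x : ℝ, PhiB γ ω c (-x) = PhiB γ ω c x) ∧
    Tendsto (fun x => PhiB γ ω c x) (cocompact ℝ) (nhds 0) ∧
    (∀ x : ℝ, -deriv (deriv (fun y => PhiB γ ω c y)) x
        + (ω - c ^ 2 / 4) * PhiB γ ω c x
        + c / 2 * PhiB γ ω c x ^ 3 - 3 / 16 * γ * PhiB γ ω c x ^ 5 = 0) :=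
  stmt_2_general γ ω c hω hc1 hc2
end

section
/- Fix b > −3/16 and set γ = 1 + (16/3)b (so γ > 0), and let ω > 0. If −2√ω < c < 2√ω, then ∫_ℝ Φ_{ω,c}(x)² dx = (8/√γ)·arctan(√((1+β)/(1−β))), where β = c/√(c² + γ(4ω − c²)). If c = 2√ω, then ∫_ℝ Φ_{ω,c}(x)² dx = 4π/√γ. -/
open MeasureTheory Real

/-- The algebraic soliton profile. -/
noncomputable def PhiA (γ c x : ℝ) : ℝ :=
  Real.sqrt (4 * c / ((c * x) ^ 2 + γ))

open Filter Topology

/-! With `k = √(4ω - c²)` and `A = √(c² + γ k²)` the bright profile satisfies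
`Φ² = 2k² / (A cosh (k x) - c)`, where `A > |c|` and `A² - c² = γ k²`. The half-angle
substitution `t = tanh (x / 2)` gives `(A cosh x - c)⁻¹` the antiderivative
`(2 / √(A² - c²)) arctan (ℓ tanh (x / 2))` with `ℓ = √((A + c) / (A - c))`, whose limits at
`±∞` are `± (2 / √(A² - c²)) arctan ℓ`; and `(1 + β) / (1 - β) = (A + c) / (A - c)`.
The algebraic profile `4c / ((c x)² + γ)` is a rescaled Lorentzian, whose integral is `π`. -/

theorem Real.hasDerivAt_tanh (x : ℝ) : HasDerivAt tanh (1 / cosh x ^ 2) x := by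
  have h := (hasDerivAt_sinh x).div (hasDerivAt_cosh x) (cosh_pos x).ne'
  rw [show sinh / cosh = tanh from funext fun y => (tanh_eq_sinh_div_cosh y).symm] at h
  refine h.congr_deriv ?_
  rw [← cosh_sq_sub_sinh_sq x]; ring

theorem Real.tendsto_tanh_atTop : Tendsto tanh atTop (𝓝 1) := by
  have hlow : Tendsto (fun x => 1 - exp (-x)) atTop (𝓝 1) := by
    simpa using tendsto_exp_neg_atTop_nhds_zero.const_sub (1 : ℝ)
  refine tendsto_of_tendsto_of_tendsto_of_le_of_le hlow tendsto_const_nhds (fun x => ?_)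
    (fun x => (tanh_lt_one x).le)
  have h : 1 - tanh x = exp (-x) / cosh x := by
    rw [tanh_eq_sinh_div_cosh, ← cosh_sub_sinh]; field_simp [(cosh_pos x).ne']
  have : exp (-x) / cosh x ≤ exp (-x) := div_le_self (exp_pos _).le (one_le_cosh x)
  linarith

theorem Real.tendsto_tanh_atBot : Tendsto tanh atBot (𝓝 (-1)) := by
  have := (tendsto_tanh_atTop.comp tendsto_neg_atBot_atTop).neg
  simpa [Function.comp_def, tanh_neg] using this

theorem integrable_of_hasDerivAt_of_nonneg {g g' : ℝ → ℝ} {m n : ℝ}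
    (hderiv : ∀ x, HasDerivAt g (g' x) x) (hg' : ∀ x, 0 ≤ g' x)
    (hbot : Tendsto g atBot (𝓝 m)) (htop : Tendsto g atTop (𝓝 n)) : Integrable g' := by
  have hint : ∀ a b, IntervalIntegrable g' volume a b := fun a b =>
    intervalIntegral.intervalIntegrable_deriv_of_nonneg
      (fun x _ => (hderiv x).continuousAt.continuousWithinAt) (fun x _ => hderiv x)
      (fun x _ => hg' x)
  refine integrable_of_intervalIntegral_norm_tendsto (n - m) (fun i => (hint (-i) i).1)
    tendsto_neg_atTop_atBot tendsto_id ?_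
  simp_rw [Real.norm_of_nonneg (hg' _),
    intervalIntegral.integral_eq_sub_of_hasDerivAt (fun x _ => hderiv x) (hint _ _)]
  exact htop.sub (hbot.comp tendsto_neg_atTop_atBot)

theorem mul_cosh_sub_pos {A c : ℝ} (hc : |c| < A) (x : ℝ) : 0 < A * cosh x - c := by
  have := abs_lt.1 hc
  nlinarith [one_le_cosh x]

theorem hasDerivAt_arctan_mul_tanh_half {A c l : ℝ} (hc : |c| < A)
    (hl : l ^ 2 * (A - c) = A + c) (x : ℝ) :
    HasDerivAt (fun x => 2 / (l * (A - c)) * arctan (l * tanh (x / 2)))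
      (A * cosh x - c)⁻¹ x := by
  have hAc : 0 < A - c := by linarith [le_abs_self c]
  have hl0 : l ≠ 0 := by
    rintro rfl; linarith [neg_abs_le c]
  have h := (((hasDerivAt_tanh (x / 2)).comp x ((hasDerivAt_id x).div_const 2)).const_mul l
    |>.arctan).const_mul (2 / (l * (A - c)))
  refine h.congr_deriv ?_
  have hpy := cosh_sq_sub_sinh_sq (x / 2)
  have hden := mul_cosh_sub_pos hc x
  have hcosh : cosh x = cosh (x / 2) ^ 2 + sinh (x / 2) ^ 2 := by
    rw [← cosh_two_mul]; ring_nf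
  rw [hcosh] at hden ⊢
  simp only [Function.comp_def, id, tanh_eq_sinh_div_cosh]
  have hch := (cosh_pos (x / 2)).ne'
  field_simp
  linear_combination (-sinh (x / 2) ^ 2) * hl + c * hpy

theorem integral_inv_mul_cosh_sub {A c : ℝ} (hc : |c| < A) :
    ∫ x, (A * cosh x - c)⁻¹ = 4 / √(A ^ 2 - c ^ 2) * arctan √((A + c) / (A - c)) := by
  have hAc : 0 < A - c := by linarith [le_abs_self c]
  have hAc' : 0 < A + c := by linarith [neg_abs_le c]
  set l := √((A + c) / (A - c))
  have hl : l ^ 2 * (A - c) = A + c := by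
    rw [sq_sqrt (div_pos hAc' hAc).le]; field_simp
  have hD : l * (A - c) = √(A ^ 2 - c ^ 2) := by
    rw [← sqrt_sq hAc.le, ← sqrt_mul (div_pos hAc' hAc).le]
    congr 1; field_simp; ring
  have hlim : ∀ {L : Filter ℝ} {t : ℝ}, Tendsto (fun x => tanh (x / 2)) L (𝓝 t) →
      Tendsto (fun x => 2 / (l * (A - c)) * arctan (l * tanh (x / 2))) L
        (𝓝 (2 / (l * (A - c)) * arctan (l * t))) := fun ht =>
    ((continuous_arctan.tendsto _).comp (ht.const_mul l)).const_mul _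
  have hderiv := hasDerivAt_arctan_mul_tanh_half hc hl
  have hbot := hlim (tendsto_tanh_atBot.comp (tendsto_id.atBot_div_const two_pos))
  have htop := hlim (tendsto_tanh_atTop.comp (tendsto_id.atTop_div_const two_pos))
  have hint := integrable_of_hasDerivAt_of_nonneg hderiv
    (fun x => inv_nonneg.2 (mul_cosh_sub_pos hc x).le) hbot htop
  rw [integral_of_hasDerivAt_of_tendsto hderiv hint hbot htop, hD, mul_neg, arctan_neg, mul_one]
  ring

theorem integral_PhiB_sq {γ ω c : ℝ} (hγ : 0 < γ) (hc : c ^ 2 < 4 * ω) :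
    ∫ x, PhiB γ ω c x ^ 2 =
      8 / √γ * arctan √((1 + c / √(c ^ 2 + γ * (4 * ω - c ^ 2))) /
        (1 - c / √(c ^ 2 + γ * (4 * ω - c ^ 2)))) := by
  set k := √(4 * ω - c ^ 2)
  set A := √(c ^ 2 + γ * (4 * ω - c ^ 2))
  have hk : 0 < k := sqrt_pos.2 (by linarith)
  have hk2 : k ^ 2 = 4 * ω - c ^ 2 := sq_sqrt (by linarith)
  have hA2 : A ^ 2 = c ^ 2 + γ * k ^ 2 := by rw [hk2]; exact sq_sqrt (by positivity)
  have hcA : |c| < A := abs_lt_of_sq_lt_sq (by nlinarith) (sqrt_nonneg _)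
  have hA : A ≠ 0 := by linarith [abs_nonneg c]
  have hPhi : ∀ x, PhiB γ ω c x ^ 2 = 2 * k ^ 2 * (A * cosh (k * x) - c)⁻¹ := fun x => by
    rw [PhiB, sq_sqrt (div_nonneg (by linarith) (mul_cosh_sub_pos hcA _).le), hk2,
      div_eq_mul_inv]
  have hD : √(A ^ 2 - c ^ 2) = √γ * k := by
    rw [hA2, add_sub_cancel_left, sqrt_mul hγ.le, sqrt_sq hk.le]
  have hβ : (1 + c / A) / (1 - c / A) = (A + c) / (A - c) := by
    rw [one_add_div hA, one_sub_div hA, div_div_div_cancel_right₀ hA]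
  simp_rw [hPhi]
  rw [integral_const_mul, Measure.integral_comp_mul_left (fun y => (A * cosh y - c)⁻¹),
    integral_inv_mul_cosh_sub hcA, hD, hβ, smul_eq_mul, abs_inv, abs_of_pos hk]
  field_simp
  ring

theorem integral_inv_sq_add {a γ : ℝ} (ha : a ≠ 0) (hγ : 0 < γ) :
    ∫ x, ((a * x) ^ 2 + γ)⁻¹ = π / (|a| * √γ) := by
  have hsγ : 0 < √γ := sqrt_pos.2 hγ
  have h : ∀ x, ((a * x) ^ 2 + γ)⁻¹ = γ⁻¹ * (1 + (a / √γ * x) ^ 2)⁻¹ := fun x => by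
    rw [mul_pow (a / √γ), div_pow, sq_sqrt hγ.le]; field_simp; ring
  simp_rw [h]
  rw [integral_const_mul, Measure.integral_comp_mul_left (fun y => (1 + y ^ 2)⁻¹),
    integral_univ_inv_one_add_sq, smul_eq_mul, inv_div, abs_div, abs_of_pos hsγ]
  field_simp
  rw [sq_sqrt hγ.le]

theorem integral_PhiA_sq {γ c : ℝ} (hγ : 0 < γ) (hc : 0 < c) :
    ∫ x, PhiA γ c x ^ 2 = 4 * π / √γ := by
  have h : ∀ x, PhiA γ c x ^ 2 = 4 * c * ((c * x) ^ 2 + γ)⁻¹ := fun x => by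
    rw [PhiA, sq_sqrt (by positivity), div_eq_mul_inv]
  simp_rw [h]
  rw [integral_const_mul, integral_inv_sq_add hc.ne' hγ, abs_of_pos hc]
  field_simp

/-- Mass of the solitons in the case `γ > 0`: for `-2√ω < c < 2√ω` the mass is
`(8/√γ) arctan √((1+β)/(1-β))` with `β = c/√(c² + γ(4ω - c²))`, and for `c = 2√ω`
the mass of the algebraic soliton is `4π/√γ`. -/
theorem stmt_4 (b γ ω c : ℝ) (hb : -3 / 16 < b) (hγ : γ = 1 + 16 / 3 * b) (hω : 0 < ω) :
    ((-2 * Real.sqrt ω < c ∧ c < 2 * Real.sqrt ω) →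
      (∫ x : ℝ, (PhiB γ ω c x) ^ 2) =
        8 / Real.sqrt γ * Real.arctan (Real.sqrt
          ((1 + c / Real.sqrt (c ^ 2 + γ * (4 * ω - c ^ 2))) /
            (1 - c / Real.sqrt (c ^ 2 + γ * (4 * ω - c ^ 2)))))) ∧
    (c = 2 * Real.sqrt ω →
      (∫ x : ℝ, (PhiA γ c x) ^ 2) = 4 * Real.pi / Real.sqrt γ) := by
  have hγ0 : 0 < γ := by linarith
  refine ⟨fun ⟨hlo, hhi⟩ => integral_PhiB_sq hγ0 ?_, fun hc => integral_PhiA_sq hγ0 ?_⟩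
  · have h4ω : (2 * √ω) ^ 2 = 4 * ω := by rw [mul_pow, sq_sqrt hω.le]; norm_num
    rw [← h4ω]
    exact sq_lt_sq' (by linarith) hhi
  · rw [hc]; positivity
end
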